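/- arXiv:1911.05885 — 2 statements merged into one kernel-verified Lean document; each statement's English description precedes it below -/
import Mathlib

section
/- For ε = log(n)/n, the quantity (1-ε)^n · ((1+ε)^n − 1) converges to 1 as n → ∞. -/
/-!
Since `(1 - ε) (1 + ε) = 1 - ε²`, the sequence equals `(1 - ε²)^n - (1 - ε)^n`.
With `ε = log n / n` we have `n ε² = (log n)² / n → 0`, so `(1 - ε²)^n → exp 0 = 1`,
while `(1 - ε)^n ≤ exp (-n ε) = 1 / n → 0`.
-/

open Real Filter Topology

lemma one_sub_pow_mul_one_add_pow_sub_one {R : Type*} [CommRing R] (x : R) (n : ℕ) :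
    (1 - x) ^ n * ((1 + x) ^ n - 1) = (1 - x ^ 2) ^ n - (1 - x) ^ n := by
  rw [mul_sub, mul_one, ← mul_pow]
  ring

lemma tendsto_one_sub_div_pow_of_tendsto_atTop {t : ℕ → ℝ} (ht : Tendsto t atTop atTop)
    (ht_le : ∀ᶠ n in atTop, t n ≤ n) :
    Tendsto (fun n : ℕ => (1 - t n / n) ^ n) atTop (𝓝 0) := by
  have hexp : Tendsto (fun n => exp (-t n)) atTop (𝓝 0) :=
    tendsto_exp_neg_atTop_nhds_zero.comp ht
  refine tendsto_of_tendsto_of_tendsto_of_le_of_le' tendsto_const_nhds hexp ?_ ?_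
  · filter_upwards [ht_le] with n hn
    exact pow_nonneg (sub_nonneg.2 (div_le_one_of_le₀ hn n.cast_nonneg)) n
  · filter_upwards [ht_le] with n hn
    exact one_sub_div_pow_le_exp_neg hn

lemma tendsto_log_pow_div_natCast (k : ℕ) :
    Tendsto (fun n : ℕ => log n ^ k / n) atTop (𝓝 0) := by
  simpa [Function.comp_def] using (tendsto_pow_log_div_mul_add_atTop 1 0 k one_ne_zero).comp
    tendsto_natCast_atTop_atTop

lemma tendsto_one_sub_log_div_pow :
    Tendsto (fun n : ℕ => (1 - log n / n) ^ n) atTop (𝓝 0) :=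
  tendsto_one_sub_div_pow_of_tendsto_atTop
    (tendsto_log_atTop.comp tendsto_natCast_atTop_atTop)
    (Eventually.of_forall fun n => log_le_self n.cast_nonneg)

lemma tendsto_one_sub_log_div_sq_pow :
    Tendsto (fun n : ℕ => (1 - (log n / n) ^ 2) ^ n) atTop (𝓝 1) := by
  have hmul : Tendsto (fun n : ℕ => n * -(log n / n) ^ 2) atTop (𝓝 0) := by
    rw [← neg_zero]
    refine (tendsto_log_pow_div_natCast 2).neg.congr' ?_
    filter_upwards [eventually_ne_atTop 0] with n hn
    field_simp
  simpa [sub_eq_add_neg] using tendsto_one_add_pow_exp_of_tendsto hmul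

theorem stmt_0 :
    Filter.Tendsto
      (fun n : ℕ => (1 - Real.log n / n) ^ n * ((1 + Real.log n / n) ^ n - 1))
      Filter.atTop (nhds 1) := by
  simp only [one_sub_pow_mul_one_add_pow_sub_one]
  simpa using tendsto_one_sub_log_div_sq_pow.sub tendsto_one_sub_log_div_pow
end

section
/- For any ε ∈ (0,1) and natural number n ≥ 1, (1 − 1/2^{2n})^n > 1/2^n, i.e., the utility attainable by a mask corresponding to a satisfying assignment strictly exceeds the maximum utility of any mask not corresponding to a satisfying assignment. -/
/-- Bernoulli's inequality gives `(1 - 1 / a ^ 2) ^ n ≥ 1 - n / a ^ 2`, and `n < a ≤ a (a - 1)`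
makes this exceed `1 / a`. -/
theorem one_div_lt_one_sub_one_div_sq_pow {a : ℝ} {n : ℕ} (ha : 2 ≤ a) (hna : (n : ℝ) < a) :
    1 / a < (1 - 1 / a ^ 2) ^ n := by
  have ha0 : 0 < a := by linarith
  have hx : -2 ≤ -(1 / a ^ 2) := by
    have : 1 / a ^ 2 ≤ 1 := (div_le_one (by positivity)).2 (by nlinarith)
    linarith
  calc 1 / a < 1 + n * -(1 / a ^ 2) := by
        rw [← sub_pos]
        field_simp
        nlinarith
    _ ≤ (1 + -(1 / a ^ 2)) ^ n := one_add_mul_le_pow hx n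
    _ = (1 - 1 / a ^ 2) ^ n := by rw [← sub_eq_add_neg]

theorem stmt_2_general (n : ℕ) (hn : 1 ≤ n) :
    (1 - 1 / 2 ^ (2 * n) : ℝ) ^ n > 1 / 2 ^ n := by
  have h2 : (2 : ℝ) ≤ 2 ^ n := by
    simpa using pow_le_pow_right₀ (by norm_num : (1 : ℝ) ≤ 2) hn
  have hlt : (n : ℝ) < 2 ^ n := by exact_mod_cast Nat.lt_two_pow_self
  rw [pow_mul', gt_iff_lt]
  exact one_div_lt_one_sub_one_div_sq_pow h2 hlt

theorem stmt_2 (ε : ℝ) (hε : ε ∈ Set.Ioo (0:ℝ) 1) (n : ℕ) (hn : 1 ≤ n) :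
    (1 - 1 / 2 ^ (2 * n) : ℝ) ^ n > 1 / 2 ^ n :=
  stmt_2_general n hn
end
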